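/- Let E_1, E_2 ⊆ [0,1) be measurable, α_1, α_2 nonnegative sequences over the dyadic subintervals of [0,1), and γ ≥ 0. Set E = (E_1/2) ∪ (E_2/2 + 1/2), α = α_1 ⊕_γ α_2, and x = |E|. Then for every λ ∈ ℝ, |{t ∈ [0,1) : A_α(1_E)(t) ≥ λ + γx}| = (1/2)(|{t : A_{α_1}(1_{E_1})(t) ≥ λ}| + |{t : A_{α_2}(1_{E_2})(t) ≥ λ}|). -/

import Mathlib

/-!
A dyadic interval of generation `n + 1` lies in one half of `[0, 1)` and is the image of a
generation-`n` interval under `s ↦ s / 2` or `s ↦ s / 2 + 1 / 2`; these maps halve lengths and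
preserve averages. So at `s / 2` the operator `A_{α₁ ⊕_γ α₂}` applied to `1_E` is the top term
`γ |E|` plus `A_{α₁} 1_{E₁}` evaluated at `s`, and likewise at `s / 2 + 1 / 2` with `α₂`, `E₂`.
The level set therefore splits into the images of the two level sets of `α₁` and `α₂` under these
maps, each of which halves Lebesgue measure.
-/

open MeasureTheory

/-- The dyadic interval `[k/2^n, (k+1)/2^n)`. -/
def dyadicI (n k : ℕ) : Set ℝ := Set.Ico ((k : ℝ) / 2 ^ n) ((k + 1 : ℝ) / 2 ^ n)

/-- The summand of the sparse operator `A_α f` at the point `x`: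
`α_J ⟨|f|⟩_J 1_J(x)`. -/
noncomputable def Aterm (α : ℕ × ℕ → ℝ) (f : ℝ → ℝ) (x : ℝ) (p : ℕ × ℕ) : ℝ :=
  Set.indicator {q : ℕ × ℕ | q.2 < 2 ^ q.1}
    (fun q => α q * ((2 : ℝ) ^ q.1 * ∫ t in dyadicI q.1 q.2, |f t|)
      * Set.indicator (dyadicI q.1 q.2) (fun _ => (1 : ℝ)) x) p

/-- The sparse operator `A_α f(x) = Σ_J α_J ⟨|f|⟩_J 1_J(x)`. -/
noncomputable def Aop (α : ℕ × ℕ → ℝ) (f : ℝ → ℝ) (x : ℝ) : ℝ := ∑' p, Aterm α f x p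

/-- Concatenation `α ⊕_γ β` of two sequences over the dyadic subintervals of `[0,1)`. -/
def concat (α β : ℕ × ℕ → ℝ) (γ : ℝ) : ℕ × ℕ → ℝ
  | (0, _) => γ
  | (n + 1, k) => if k < 2 ^ n then α (n, k) else β (n, k - 2 ^ n)

open Set Function

theorem hasSum_apply_add_of_comp_injective {M β ι : Type*} [AddCommMonoid M] [TopologicalSpace M]
    [ContinuousAdd M] {f : β → M} {g : ι → β} {b₀ : β} {a : M} (hg : Injective g)
    (hb₀ : b₀ ∉ range g) (hf : ∀ b ∉ range g, b ≠ b₀ → f b = 0) (h : HasSum (f ∘ g) a) :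
    HasSum f (f b₀ + a) := by
  classical
  have hrest : HasSum (update f b₀ 0) a := by
    refine (hg.hasSum_iff fun b hb => ?_).1 ?_
    · by_cases hb' : b = b₀
      · simp [hb']
      · simp [hb', hf b hb hb']
    · rwa [show update f b₀ 0 ∘ g = f ∘ g from
        funext fun i => update_of_ne (fun hi => hb₀ ⟨i, hi⟩) _ _]
  convert (hasSum_pi_single b₀ (f b₀)).add hrest using 1
  ext b
  by_cases hb : b = b₀
  · simp [hb]
  · simp [hb]

theorem mem_dyadicI_iff {n k : ℕ} {x : ℝ} :
    x ∈ dyadicI n k ↔ (k : ℝ) ≤ 2 ^ n * x ∧ 2 ^ n * x < k + 1 := by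
  have h : (0 : ℝ) < 2 ^ n := by positivity
  rw [dyadicI, mem_Ico, div_le_iff₀ h, lt_div_iff₀ h, mul_comm x]

theorem div_two_mem_dyadicI_succ_iff {n k : ℕ} {x : ℝ} :
    x / 2 ∈ dyadicI (n + 1) k ↔ x ∈ dyadicI n k := by
  rw [mem_dyadicI_iff, mem_dyadicI_iff, pow_succ, mul_assoc, mul_div_cancel₀ _ two_ne_zero]

theorem div_two_add_half_mem_dyadicI_succ_iff {n k : ℕ} {x : ℝ} :
    x / 2 + 1 / 2 ∈ dyadicI (n + 1) (k + 2 ^ n) ↔ x ∈ dyadicI n k := by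
  have h : (2 : ℝ) ^ (n + 1) * (x / 2 + 1 / 2) = 2 ^ n * x + 2 ^ n := by ring
  rw [mem_dyadicI_iff, mem_dyadicI_iff, h]
  push_cast
  constructor <;> rintro ⟨h₁, h₂⟩ <;> constructor <;> linarith

theorem lt_two_pow_of_mem_dyadicI {n k : ℕ} {x : ℝ} (h : x ∈ dyadicI n k) (hx : x < 1) :
    k < 2 ^ n := by
  rw [mem_dyadicI_iff] at h
  have : (k : ℝ) < 2 ^ n := by nlinarith [pow_pos (two_pos : (0 : ℝ) < 2) n]
  exact_mod_cast this

theorem div_two_add_half_notMem_dyadicI_succ {n k : ℕ} {x : ℝ} (hx : 0 ≤ x) (hk : k < 2 ^ n) :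
    x / 2 + 1 / 2 ∉ dyadicI (n + 1) k := by
  rw [mem_dyadicI_iff]
  have hk' : (k : ℝ) + 1 ≤ 2 ^ n := by exact_mod_cast hk
  have : (2 : ℝ) ^ (n + 1) * (x / 2 + 1 / 2) = 2 ^ n * x + 2 ^ n := by ring
  rw [this]
  rintro ⟨-, h⟩
  nlinarith [pow_pos (two_pos : (0 : ℝ) < 2) n]

theorem dyadicI_subset_Ico {n k : ℕ} (hk : k < 2 ^ n) : dyadicI n k ⊆ Ico 0 1 := by
  intro x hx
  have hk' : (k : ℝ) + 1 ≤ 2 ^ n := by exact_mod_cast hk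
  rw [mem_dyadicI_iff] at hx
  constructor <;> nlinarith [pow_pos (two_pos : (0 : ℝ) < 2) n]

theorem dyadicI_zero_zero : dyadicI 0 0 = Ico 0 1 := by
  simp [dyadicI]

theorem setIntegral_dyadicI_eq_intervalIntegral (n k : ℕ) (g : ℝ → ℝ) :
    ∫ t in dyadicI n k, g t = ∫ t in (k : ℝ) / 2 ^ n..(k + 1) / 2 ^ n, g t := by
  rw [intervalIntegral.integral_of_le (by gcongr; linarith), dyadicI, integral_Ico_eq_integral_Ioo,
    integral_Ioc_eq_integral_Ioo]

theorem setIntegral_dyadicI_succ (n k : ℕ) (g : ℝ → ℝ) :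
    ∫ t in dyadicI (n + 1) k, g t = (∫ s in dyadicI n k, g (s / 2)) / 2 := by
  rw [setIntegral_dyadicI_eq_intervalIntegral, setIntegral_dyadicI_eq_intervalIntegral,
    intervalIntegral.integral_comp_div _ two_ne_zero, pow_succ, div_div, div_div, smul_eq_mul,
    mul_div_cancel_left₀ _ two_ne_zero]

theorem setIntegral_dyadicI_succ_add_two_pow (n k : ℕ) (g : ℝ → ℝ) :
    ∫ t in dyadicI (n + 1) (k + 2 ^ n), g t = (∫ s in dyadicI n k, g (s / 2 + 1 / 2)) / 2 := by
  rw [setIntegral_dyadicI_eq_intervalIntegral, setIntegral_dyadicI_eq_intervalIntegral,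
    intervalIntegral.integral_comp_div_add _ two_ne_zero, smul_eq_mul,
    mul_div_cancel_left₀ _ two_ne_zero]
  congr 1 <;> push_cast <;> field_simp <;> ring

section Aterm

variable {α α₁ α₂ : ℕ × ℕ → ℝ} {f f₁ f₂ : ℝ → ℝ} {γ x s : ℝ} {n k : ℕ}

theorem Aterm_eq_zero_of_two_pow_le (hk : 2 ^ n ≤ k) : Aterm α f x (n, k) = 0 :=
  indicator_of_notMem (show (n, k) ∉ {q : ℕ × ℕ | q.2 < 2 ^ q.1} from not_lt.2 hk) _

theorem Aterm_eq_zero_of_notMem (hx : x ∉ dyadicI n k) : Aterm α f x (n, k) = 0 := by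
  simp [Aterm, indicator_of_notMem hx]

theorem Aterm_eq_of_mem (hk : k < 2 ^ n) (hx : x ∈ dyadicI n k) :
    Aterm α f x (n, k) = α (n, k) * (2 ^ n * ∫ t in dyadicI n k, |f t|) := by
  simp [Aterm, indicator_of_mem (show (n, k) ∈ {q : ℕ × ℕ | q.2 < 2 ^ q.1} from hk),
    indicator_of_mem hx]

theorem Aterm_concat_zero_zero (hx : x ∈ Ico 0 1) :
    Aterm (concat α₁ α₂ γ) f x (0, 0) = γ * ∫ t in Ico 0 1, |f t| := by
  rw [Aterm_eq_of_mem (by norm_num) (dyadicI_zero_zero ▸ hx), dyadicI_zero_zero, pow_zero, one_mul]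
  rfl

theorem Aterm_concat_succ_div_two (hf : ∀ s ∈ Ico 0 1, f (s / 2) = f₁ s) (hs : s < 1) :
    Aterm (concat α₁ α₂ γ) f (s / 2) (n + 1, k) = Aterm α₁ f₁ s (n, k) := by
  by_cases hmem : s ∈ dyadicI n k
  · have hk := lt_two_pow_of_mem_dyadicI hmem hs
    rw [Aterm_eq_of_mem (hk.trans (Nat.pow_lt_pow_succ one_lt_two))
        (div_two_mem_dyadicI_succ_iff.2 hmem), Aterm_eq_of_mem hk hmem,
      setIntegral_dyadicI_succ, setIntegral_congr_fun (s := dyadicI n k) measurableSet_Ico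
        fun t ht => congrArg abs (hf t (dyadicI_subset_Ico hk ht))]
    simp only [concat, if_pos hk]
    ring
  · rw [Aterm_eq_zero_of_notMem (mt div_two_mem_dyadicI_succ_iff.1 hmem),
      Aterm_eq_zero_of_notMem hmem]

theorem Aterm_concat_succ_div_two_add_half (hf : ∀ s ∈ Ico 0 1, f (s / 2 + 1 / 2) = f₂ s)
    (hs : s < 1) :
    Aterm (concat α₁ α₂ γ) f (s / 2 + 1 / 2) (n + 1, k + 2 ^ n) = Aterm α₂ f₂ s (n, k) := by
  by_cases hmem : s ∈ dyadicI n k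
  · have hk := lt_two_pow_of_mem_dyadicI hmem hs
    rw [Aterm_eq_of_mem (by rw [pow_succ]; omega) (div_two_add_half_mem_dyadicI_succ_iff.2 hmem),
      Aterm_eq_of_mem hk hmem, setIntegral_dyadicI_succ_add_two_pow,
      setIntegral_congr_fun (s := dyadicI n k) measurableSet_Ico
        fun t ht => congrArg abs (hf t (dyadicI_subset_Ico hk ht))]
    simp only [concat, if_neg (Nat.not_lt.2 (Nat.le_add_left _ _)), Nat.add_sub_cancel]
    ring
  · rw [Aterm_eq_zero_of_notMem (mt div_two_add_half_mem_dyadicI_succ_iff.1 hmem),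
      Aterm_eq_zero_of_notMem hmem]

end Aterm

section Aop

variable {α₁ α₂ : ℕ × ℕ → ℝ} {f f₁ f₂ : ℝ → ℝ} {γ s : ℝ}

theorem Aop_concat_div_two (hf : ∀ s ∈ Ico 0 1, f (s / 2) = f₁ s) (hs : s ∈ Ico 0 1)
    (hsum : Summable (Aterm α₁ f₁ s)) :
    Aop (concat α₁ α₂ γ) f (s / 2) = γ * (∫ t in Ico 0 1, |f t|) + Aop α₁ f₁ s := by
  set g : ℕ × ℕ → ℕ × ℕ := fun p => (p.1 + 1, p.2)
  have hg : Injective g := fun p q h =>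
    Prod.ext (Nat.succ_injective (congrArg Prod.fst h)) (congrArg Prod.snd h :)
  have hrange : ∀ p ∉ range g, p.1 = 0 := by
    rintro ⟨_ | n, k⟩ hp
    · rfl
    · exact absurd ⟨(n, k), rfl⟩ hp
  have hzero : ∀ p ∉ range g, p ≠ (0, 0) → Aterm (concat α₁ α₂ γ) f (s / 2) p = 0 := by
    rintro ⟨n, k⟩ hp hne
    obtain rfl : n = 0 := hrange _ hp
    exact Aterm_eq_zero_of_two_pow_le (by simpa [Nat.one_le_iff_ne_zero] using hne)
  have hsum' := hasSum_apply_add_of_comp_injective hg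
    (fun ⟨_, hp⟩ => Nat.succ_ne_zero _ (congrArg Prod.fst hp)) hzero
    (hsum.hasSum.congr_fun fun _ => Aterm_concat_succ_div_two hf hs.2)
  rw [Aterm_concat_zero_zero ⟨by linarith [hs.1], by linarith [hs.2]⟩] at hsum'
  exact hsum'.tsum_eq

theorem Aop_concat_div_two_add_half (hf : ∀ s ∈ Ico 0 1, f (s / 2 + 1 / 2) = f₂ s)
    (hs : s ∈ Ico 0 1) (hsum : Summable (Aterm α₂ f₂ s)) :
    Aop (concat α₁ α₂ γ) f (s / 2 + 1 / 2) = γ * (∫ t in Ico 0 1, |f t|) + Aop α₂ f₂ s := by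
  set g : ℕ × ℕ → ℕ × ℕ := fun p => (p.1 + 1, p.2 + 2 ^ p.1)
  have hg : Injective g := by
    rintro ⟨n, k⟩ ⟨m, l⟩ h
    obtain rfl : n = m := Nat.succ_injective (congrArg Prod.fst h)
    exact Prod.ext rfl (Nat.add_right_cancel (congrArg Prod.snd h))
  have hzero : ∀ p ∉ range g, p ≠ (0, 0) → Aterm (concat α₁ α₂ γ) f (s / 2 + 1 / 2) p = 0 := by
    rintro ⟨_ | n, k⟩ hp hne
    · exact Aterm_eq_zero_of_two_pow_le (by simpa [Nat.one_le_iff_ne_zero] using hne)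
    · rcases lt_or_ge k (2 ^ n) with hk | hk
      · exact Aterm_eq_zero_of_notMem (div_two_add_half_notMem_dyadicI_succ hs.1 hk)
      · exact absurd ⟨(n, k - 2 ^ n), by simp [g, Nat.sub_add_cancel hk]⟩ hp
  have hsum' := hasSum_apply_add_of_comp_injective hg
    (fun ⟨_, hp⟩ => Nat.succ_ne_zero _ (congrArg Prod.fst hp)) hzero
    (hsum.hasSum.congr_fun fun _ => Aterm_concat_succ_div_two_add_half hf hs.2)
  rw [Aterm_concat_zero_zero ⟨by linarith [hs.1], by linarith [hs.2]⟩] at hsum'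
  exact hsum'.tsum_eq

end Aop

theorem volume_preimage_two_mul_sub (c : ℝ) (S : Set ℝ) :
    volume ((fun t => 2 * t - c) ⁻¹' S) = volume S / 2 := by
  have h : (fun t : ℝ => 2 * t - c) ⁻¹' S = (2 * ·) ⁻¹' ((· + -c) ⁻¹' S) := by
    ext t; simp [sub_eq_add_neg]
  rw [h, Real.volume_preimage_mul_left two_ne_zero, measure_preimage_add_right,
    abs_of_pos (by norm_num), ENNReal.ofReal_inv_of_pos two_pos, ENNReal.ofReal_ofNat,
    ENNReal.div_eq_inv_mul]

theorem volume_sep_Ico_zero_one (P : ℝ → Prop) :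
    volume {t ∈ Ico (0 : ℝ) 1 | P t}
      = (volume {s ∈ Ico (0 : ℝ) 1 | P (s / 2)} + volume {s ∈ Ico (0 : ℝ) 1 | P (s / 2 + 1 / 2)})
        / 2 := by
  have hleft : {t ∈ Ico (0 : ℝ) 1 | P t} ∩ Ico 0 (1 / 2)
      = (fun t => 2 * t - 0) ⁻¹' {s ∈ Ico (0 : ℝ) 1 | P (s / 2)} := by
    ext t
    simp only [mem_inter_iff, mem_ofPred_eq, mem_preimage, mem_Ico, sub_zero,
      mul_div_cancel_left₀ t two_ne_zero]
    constructor
    · rintro ⟨⟨⟨h₀, -⟩, hP⟩, -, h₁⟩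
      exact ⟨⟨by linarith, by linarith⟩, hP⟩
    · rintro ⟨⟨h₀, h₁⟩, hP⟩
      exact ⟨⟨⟨by linarith, by linarith⟩, hP⟩, by linarith, by linarith⟩
  have hright : {t ∈ Ico (0 : ℝ) 1 | P t} \ Ico 0 (1 / 2)
      = (fun t => 2 * t - 1) ⁻¹' {s ∈ Ico (0 : ℝ) 1 | P (s / 2 + 1 / 2)} := by
    ext t
    have ht : (2 * t - 1) / 2 + 1 / 2 = t := by ring
    simp only [mem_sdiff, mem_ofPred_eq, mem_preimage, mem_Ico, ht, not_and, not_lt]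
    constructor
    · rintro ⟨⟨⟨h₀, h₁⟩, hP⟩, h⟩
      exact ⟨⟨by linarith [h h₀], by linarith⟩, hP⟩
    · rintro ⟨⟨h₀, h₁⟩, hP⟩
      exact ⟨⟨⟨by linarith, by linarith⟩, hP⟩, fun _ => by linarith⟩
  rw [← measure_inter_add_sdiff _ measurableSet_Ico, hleft, hright, volume_preimage_two_mul_sub,
    volume_preimage_two_mul_sub, ENNReal.div_add_div_same]

section HalvesUnion

variable {E₁ E₂ : Set ℝ} {s : ℝ}

theorem div_two_mem_union_image_iff (hE₂ : E₂ ⊆ Ici 0) (hs : s < 1) :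
    s / 2 ∈ (fun s => s / 2) '' E₁ ∪ (fun s => s / 2 + 1 / 2) '' E₂ ↔ s ∈ E₁ := by
  constructor
  · rintro (⟨u, hu, h⟩ | ⟨u, hu, h⟩) <;> simp only at h
    · rwa [show s = u by linarith]
    · linarith [show (0 : ℝ) ≤ u from hE₂ hu]
  · exact fun h => Or.inl ⟨s, h, rfl⟩

theorem div_two_add_half_mem_union_image_iff (hE₁ : E₁ ⊆ Iio 1) (hs : 0 ≤ s) :
    s / 2 + 1 / 2 ∈ (fun s => s / 2) '' E₁ ∪ (fun s => s / 2 + 1 / 2) '' E₂ ↔ s ∈ E₂ := by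
  constructor
  · rintro (⟨u, hu, h⟩ | ⟨u, hu, h⟩) <;> simp only at h
    · linarith [show u < 1 from hE₁ hu]
    · rwa [show s = u by linarith]
  · exact fun h => Or.inr ⟨s, h, rfl⟩

theorem indicator_union_image_div_two {M : Type*} [Zero M] (c : M) (hE₂ : E₂ ⊆ Ici 0)
    (hs : s < 1) :
    ((fun s => s / 2) '' E₁ ∪ (fun s => s / 2 + 1 / 2) '' E₂).indicator (fun _ => c) (s / 2)
      = E₁.indicator (fun _ => c) s := by
  by_cases h : s ∈ E₁
  · rw [indicator_of_mem ((div_two_mem_union_image_iff hE₂ hs).2 h), indicator_of_mem h]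
  · rw [indicator_of_notMem (mt (div_two_mem_union_image_iff hE₂ hs).1 h), indicator_of_notMem h]

theorem indicator_union_image_div_two_add_half {M : Type*} [Zero M] (c : M) (hE₁ : E₁ ⊆ Iio 1)
    (hs : 0 ≤ s) :
    ((fun s => s / 2) '' E₁ ∪ (fun s => s / 2 + 1 / 2) '' E₂).indicator (fun _ => c) (s / 2 + 1 / 2)
      = E₂.indicator (fun _ => c) s := by
  by_cases h : s ∈ E₂
  · rw [indicator_of_mem ((div_two_add_half_mem_union_image_iff hE₁ hs).2 h), indicator_of_mem h]
  · rw [indicator_of_notMem (mt (div_two_add_half_mem_union_image_iff hE₁ hs).1 h),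
      indicator_of_notMem h]

theorem union_image_halves_subset (hE₁ : E₁ ⊆ Ico 0 1) (hE₂ : E₂ ⊆ Ico 0 1) :
    (fun s => s / 2) '' E₁ ∪ (fun s => s / 2 + 1 / 2) '' E₂ ⊆ Ico 0 1 := by
  rintro _ (⟨u, hu, rfl⟩ | ⟨u, hu, rfl⟩)
  · obtain ⟨h₀, h₁⟩ := hE₁ hu
    constructor <;> linarith
  · obtain ⟨h₀, h₁⟩ := hE₂ hu
    constructor <;> linarith

theorem measurableSet_union_image_halves (hm₁ : MeasurableSet E₁) (hm₂ : MeasurableSet E₂) :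
    MeasurableSet ((fun s => s / 2) '' E₁ ∪ (fun s => s / 2 + 1 / 2) '' E₂) :=
  (hm₁.image_of_continuousOn_injOn (by fun_prop) fun _ _ _ _ h => by simpa using h).union
    (hm₂.image_of_continuousOn_injOn (by fun_prop) fun _ _ _ _ h => by simpa using h)

end HalvesUnion

theorem setIntegral_abs_indicator_one_of_subset {X : Type*} [MeasurableSpace X] {μ : Measure X}
    {E S : Set X} (hE : MeasurableSet E) (hES : E ⊆ S) :
    ∫ t in S, |E.indicator (fun _ => (1 : ℝ)) t| ∂μ = (μ E).toReal := by
  simp_rw [abs_of_nonneg (indicator_nonneg (fun _ _ => zero_le_one) _)]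
  rw [setIntegral_indicator hE, inter_eq_right.2 hES, setIntegral_const, smul_eq_mul, mul_one]
  rfl

theorem stmt4_general (E₁ E₂ : Set ℝ) (hE₁ : E₁ ⊆ Set.Ico 0 1) (hE₂ : E₂ ⊆ Set.Ico 0 1)
    (hm₁ : MeasurableSet E₁) (hm₂ : MeasurableSet E₂)
    (α₁ α₂ : ℕ × ℕ → ℝ)
    (hs₁ : ∀ y : ℝ, Summable (Aterm α₁ (Set.indicator E₁ fun _ => 1) y))
    (hs₂ : ∀ y : ℝ, Summable (Aterm α₂ (Set.indicator E₂ fun _ => 1) y))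
    (γ : ℝ) (lam : ℝ) :
    volume {t ∈ Set.Ico (0 : ℝ) 1 |
        lam + γ * (volume ((fun s => s / 2) '' E₁ ∪ (fun s => s / 2 + 1 / 2) '' E₂)).toReal
          ≤ Aop (concat α₁ α₂ γ)
              (Set.indicator ((fun s => s / 2) '' E₁ ∪ (fun s => s / 2 + 1 / 2) '' E₂)
                fun _ => 1) t}
      = (volume {t ∈ Set.Ico (0 : ℝ) 1 | lam ≤ Aop α₁ (Set.indicator E₁ fun _ => 1) t}
          + volume {t ∈ Set.Ico (0 : ℝ) 1 | lam ≤ Aop α₂ (Set.indicator E₂ fun _ => 1) t})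
        / 2 := by
  set E := (fun s => s / 2) '' E₁ ∪ (fun s => s / 2 + 1 / 2) '' E₂
  have hE : ∫ t in Ico 0 1, |E.indicator (fun _ => (1 : ℝ)) t| = (volume E).toReal :=
    setIntegral_abs_indicator_one_of_subset (measurableSet_union_image_halves hm₁ hm₂)
      (union_image_halves_subset hE₁ hE₂)
  have hleft (s : ℝ) (hs : s ∈ Ico 0 1) :
      Aop (concat α₁ α₂ γ) (E.indicator fun _ => 1) (s / 2)
        = γ * (volume E).toReal + Aop α₁ (E₁.indicator fun _ => 1) s := by
    rw [← hE]
    exact Aop_concat_div_two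
      (fun s hs => indicator_union_image_div_two 1 (fun u hu => (hE₂ hu).1) hs.2) hs (hs₁ s)
  have hright (s : ℝ) (hs : s ∈ Ico 0 1) :
      Aop (concat α₁ α₂ γ) (E.indicator fun _ => 1) (s / 2 + 1 / 2)
        = γ * (volume E).toReal + Aop α₂ (E₂.indicator fun _ => 1) s := by
    rw [← hE]
    exact Aop_concat_div_two_add_half
      (fun s hs => indicator_union_image_div_two_add_half 1 (fun u hu => (hE₁ hu).2) hs.1) hs
      (hs₂ s)
  rw [volume_sep_Ico_zero_one]
  congr 2 <;> congr 1 <;> ext s <;> refine and_congr_right fun hs => ?_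
  · rw [hleft s hs, add_comm lam, add_le_add_iff_left]
  · rw [hright s hs, add_comm lam, add_le_add_iff_left]

/-- Dynamics of level sets under concatenation:
`|{A_{α₁⊕_γα₂}(1_{E₁⊕E₂}) ≥ λ + γx}| = (|{A_{α₁}(1_{E₁}) ≥ λ}| + |{A_{α₂}(1_{E₂}) ≥ λ}|)/2`,
where `x = |E₁ ⊕ E₂|`. -/
theorem stmt4 (E₁ E₂ : Set ℝ) (hE₁ : E₁ ⊆ Set.Ico 0 1) (hE₂ : E₂ ⊆ Set.Ico 0 1)
    (hm₁ : MeasurableSet E₁) (hm₂ : MeasurableSet E₂)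
    (α₁ α₂ : ℕ × ℕ → ℝ) (hα₁ : ∀ p, 0 ≤ α₁ p) (hα₂ : ∀ p, 0 ≤ α₂ p)
    (hs₁ : ∀ y : ℝ, Summable (Aterm α₁ (Set.indicator E₁ fun _ => 1) y))
    (hs₂ : ∀ y : ℝ, Summable (Aterm α₂ (Set.indicator E₂ fun _ => 1) y))
    (γ : ℝ) (hγ : 0 ≤ γ) (lam : ℝ) :
    volume {t ∈ Set.Ico (0 : ℝ) 1 |
        lam + γ * (volume ((fun s => s / 2) '' E₁ ∪ (fun s => s / 2 + 1 / 2) '' E₂)).toReal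
          ≤ Aop (concat α₁ α₂ γ)
              (Set.indicator ((fun s => s / 2) '' E₁ ∪ (fun s => s / 2 + 1 / 2) '' E₂)
                fun _ => 1) t}
      = (volume {t ∈ Set.Ico (0 : ℝ) 1 | lam ≤ Aop α₁ (Set.indicator E₁ fun _ => 1) t}
          + volume {t ∈ Set.Ico (0 : ℝ) 1 | lam ≤ Aop α₂ (Set.indicator E₂ fun _ => 1) t})
        / 2 :=
  stmt4_general E₁ E₂ hE₁ hE₂ hm₁ hm₂ α₁ α₂ hs₁ hs₂ γ lam
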